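/- arXiv:1805.00381 — 2 statements merged into one kernel-verified Lean document; each statement's English description precedes it below -/
import Mathlib

section
/- Case-elimination lemma: if T' ⊢ ⋀_{i∈I}(Box φᵢ → φᵢ) → [1]φ, where [1] satisfies distribution and provable Σ₁-completeness for the Σ₁-sentences Box φᵢ, then T' ⊢ [1]( (⋀_{i∈I} ¬Box φᵢ) → φ ). -/
/-- An abstract propositional language with implication and falsum. -/
structure Lang (F : Type) where
  imp : F → F → F
  bot : F

namespace Lang
variable {F : Type} (L : Lang F)
def neg (φ : F) : F := L.imp φ L.bot
def top : F := L.neg L.bot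
def conj (φ ψ : F) : F := L.neg (L.imp φ (L.neg ψ))
def iff (φ ψ : F) : F := L.conj (L.imp φ ψ) (L.imp ψ φ)
end Lang

/-- Classical propositional derivability from a set of axioms `Γ`
(a Hilbert system with modus ponens). -/
inductive Deriv {F : Type} (L : Lang F) (Γ : Set F) : F → Prop
  | hyp {φ} : φ ∈ Γ → Deriv L Γ φ
  | ax1 (φ ψ) : Deriv L Γ (L.imp φ (L.imp ψ φ))
  | ax2 (φ ψ χ) : Deriv L Γ (L.imp (L.imp φ (L.imp ψ χ)) (L.imp (L.imp φ ψ) (L.imp φ χ)))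
  | ax3 (φ ψ) : Deriv L Γ (L.imp (L.imp (L.neg φ) (L.neg ψ)) (L.imp ψ φ))
  | mp {φ ψ} : Deriv L Γ (L.imp φ ψ) → Deriv L Γ φ → Deriv L Γ ψ

/-- The local reflection schema for a provability predicate `Bx`. -/
def RfnSet {F : Type} (L : Lang F) (Bx : F → F) : Set F := {χ | ∃ ψ, χ = L.imp (Bx ψ) ψ}

/-- Finite conjunction of a list of sentences. -/
def conjList {F : Type} (L : Lang F) : List F → F
  | [] => L.top
  | φ :: φs => L.conj φ (conjList L φs)

/-!
Induct on the list of sentences, peeling off one `ψ` at a time and arguing by cases on `Box ψ`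
inside `T'`. If `Box ψ` holds, provable `Σ₁`-completeness gives `[1] Box ψ`, hence
`[1] (¬Box ψ → φ)`. If `¬Box ψ` holds, the reflection instance `Box ψ → ψ` is true vacuously, so
the remaining reflection instances already yield `[1] φ`, hence again `[1] (¬Box ψ → φ)`. In both
cases the hypothesis has been traded for one about the shorter list and the goal formula
`¬Box ψ → φ`, and the induction hypothesis finishes after uncurrying under `[1]`.
-/

namespace Deriv

variable {F : Type} {L : Lang F} {Γ Δ : Set F} {a b c d : F}

theorem weaken (hs : Γ ⊆ Δ) (h : Deriv L Γ a) : Deriv L Δ a := by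
  induction h with
  | hyp h => exact hyp (hs h)
  | ax1 φ ψ => exact ax1 φ ψ
  | ax2 φ ψ χ => exact ax2 φ ψ χ
  | ax3 φ ψ => exact ax3 φ ψ
  | mp _ _ ih₁ ih₂ => exact mp ih₁ ih₂

theorem weaken_insert (h : Deriv L Γ b) : Deriv L (insert a Γ) b :=
  weaken (Set.subset_insert _ _) h

theorem hyp_insert : Deriv L (insert a Γ) a := hyp (Set.mem_insert _ _)

theorem imp_self (a : F) : Deriv L Γ (L.imp a a) :=
  mp (mp (ax2 a (L.imp a a) a) (ax1 a (L.imp a a))) (ax1 a a)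

theorem deduction (h : Deriv L (insert a Γ) b) : Deriv L Γ (L.imp a b) := by
  induction h with
  | hyp h =>
    rcases h with rfl | h
    · exact imp_self _
    · exact mp (ax1 _ a) (hyp h)
  | ax1 φ ψ => exact mp (ax1 _ a) (ax1 φ ψ)
  | ax2 φ ψ χ => exact mp (ax1 _ a) (ax2 φ ψ χ)
  | ax3 φ ψ => exact mp (ax1 _ a) (ax3 φ ψ)
  | mp _ _ ih₁ ih₂ => exact mp (mp (ax2 a _ _) ih₁) ih₂

theorem imp_trans (h₁ : Deriv L Γ (L.imp a b)) (h₂ : Deriv L Γ (L.imp b c)) :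
    Deriv L Γ (L.imp a c) :=
  deduction (mp (weaken_insert h₂) (mp (weaken_insert h₁) hyp_insert))

theorem imp_imp_trans (h₁ : Deriv L Γ (L.imp a (L.imp b c))) (h₂ : Deriv L Γ (L.imp c d)) :
    Deriv L Γ (L.imp a (L.imp b d)) :=
  imp_trans h₁ (deduction (imp_trans hyp_insert (weaken_insert h₂)))

theorem not_not_intro (a : F) : Deriv L Γ (L.imp a (L.neg (L.neg a))) :=
  deduction (deduction (mp hyp_insert (weaken_insert hyp_insert)))

theorem not_not_elim (a : F) : Deriv L Γ (L.imp (L.neg (L.neg a)) a) :=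
  mp (ax3 a (L.neg (L.neg a))) (not_not_intro (L.neg a))

theorem bot_elim (a : F) : Deriv L Γ (L.imp L.bot a) :=
  imp_trans (ax1 L.bot (L.neg a)) (not_not_elim a)

theorem absurd (a b : F) : Deriv L Γ (L.imp (L.neg a) (L.imp a b)) :=
  deduction (imp_trans hyp_insert (bot_elim b))

theorem absurd' (a b : F) : Deriv L Γ (L.imp a (L.imp (L.neg a) b)) :=
  deduction (deduction (mp (bot_elim b) (mp hyp_insert (weaken_insert hyp_insert))))

theorem contrapose (h : Deriv L Γ (L.imp a b)) : Deriv L Γ (L.imp (L.neg b) (L.neg a)) :=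
  deduction (deduction (mp (weaken_insert hyp_insert)
    (mp (weaken_insert (weaken_insert h)) hyp_insert)))

theorem by_cases (h₁ : Deriv L Γ (L.imp b c)) (h₂ : Deriv L Γ (L.imp (L.neg b) c)) :
    Deriv L Γ c := by
  have hn₁ : Deriv L (insert (L.neg c) Γ) (L.neg b) := mp (weaken_insert (contrapose h₁)) hyp_insert
  have hn₂ : Deriv L (insert (L.neg c) Γ) (L.neg (L.neg b)) :=
    mp (weaken_insert (contrapose h₂)) hyp_insert
  exact mp (not_not_elim c) (deduction (mp hn₂ hn₁))

theorem conj_intro (a b : F) : Deriv L Γ (L.imp a (L.imp b (L.conj a b))) :=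
  deduction (deduction (deduction
    (mp (mp hyp_insert (weaken_insert (weaken_insert hyp_insert))) (weaken_insert hyp_insert))))

theorem conj_left (a b : F) : Deriv L Γ (L.imp (L.conj a b) a) :=
  imp_trans (contrapose (absurd a (L.neg b))) (not_not_elim a)

theorem conj_right (a b : F) : Deriv L Γ (L.imp (L.conj a b) b) :=
  imp_trans (contrapose (ax1 (L.neg b) a)) (not_not_elim b)

theorem curry (h : Deriv L Γ (L.imp (L.conj a b) c)) : Deriv L Γ (L.imp a (L.imp b c)) :=
  deduction (deduction (mp (weaken_insert (weaken_insert h))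
    (mp (mp (conj_intro a b) (weaken_insert hyp_insert)) hyp_insert)))

theorem uncurry_swap (a b c : F) :
    Deriv L Γ (L.imp (L.imp b (L.imp a c)) (L.imp (L.conj a b) c)) :=
  deduction (deduction (mp (mp (weaken_insert hyp_insert) (mp (conj_right a b) hyp_insert))
    (mp (conj_left a b) hyp_insert)))

end Deriv

open Deriv

section Box

variable {F : Type} {L : Lang F} {T : Set F} {B : F → F} {b c p q ψ φ : F}
  (dist : ∀ χ ψ, Deriv L T (L.imp (B (L.imp χ ψ)) (L.imp (B χ) (B ψ))))
  (nec : ∀ χ, Deriv L T χ → Deriv L T (B χ))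
include dist nec

theorem box_mono (h : Deriv L T (L.imp p q)) : Deriv L T (L.imp (B p) (B q)) :=
  (dist p q).mp (nec _ h)

theorem imp_box_neg_imp_of_conj_reflection (hb : Deriv L T (L.imp b (B b)))
    (h : Deriv L T (L.imp (L.conj (L.imp b ψ) c) (B φ))) :
    Deriv L T (L.imp c (B (L.imp (L.neg b) φ))) := by
  have of_box : Deriv L T (L.imp b (L.imp c (B (L.imp (L.neg b) φ)))) :=
    imp_trans (imp_trans hb (box_mono dist nec (absurd' b φ))) (ax1 _ c)
  have of_not_box : Deriv L T (L.imp (L.neg b) (L.imp c (B (L.imp (L.neg b) φ)))) :=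
    imp_imp_trans (imp_trans (absurd b ψ) (curry h)) (box_mono dist nec (ax1 φ _))
  exact by_cases of_box of_not_box

end Box

theorem stmt12_general {F : Type} (L : Lang F) (T' : Set F) (Box B1 : F → F)
    (φs : List F) (φ : F)
    (compl : ∀ ψ ∈ φs, Deriv L T' (L.imp (Box ψ) (B1 (Box ψ))))
    (dist : ∀ χ ψ, Deriv L T' (L.imp (B1 (L.imp χ ψ)) (L.imp (B1 χ) (B1 ψ))))
    (nec : ∀ χ, Deriv L T' χ → Deriv L T' (B1 χ))
    (h : Deriv L T' (L.imp (conjList L (φs.map (fun ψ => L.imp (Box ψ) ψ))) (B1 φ))) :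
    Deriv L T' (B1 (L.imp (conjList L (φs.map (fun ψ => L.neg (Box ψ)))) φ)) := by
  induction φs generalizing φ with
  | nil =>
    have hφ : Deriv L T' (B1 φ) := h.mp (imp_self L.bot)
    exact (box_mono dist nec (ax1 φ L.top)).mp hφ
  | cons ψ rest ih =>
    have step := imp_box_neg_imp_of_conj_reflection dist nec (compl ψ List.mem_cons_self) h
    have hrest := ih (L.imp (L.neg (Box ψ)) φ) (fun χ hχ => compl χ (List.mem_cons_of_mem _ hχ)) step
    exact (box_mono dist nec (uncurry_swap _ _ _)).mp hrest

/-- Case-elimination lemma. If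
`T' ⊢ ⋀ᵢ(Box φᵢ → φᵢ) → [1]φ`, where `[1] = B1` satisfies necessitation and
distribution and provable `Σ₁`-completeness applies to the `Σ₁`-sentences
`Box φᵢ`, then `T' ⊢ [1]((⋀ᵢ ¬Box φᵢ) → φ)`. -/
theorem stmt12 {F : Type} (L : Lang F) (T' EA : Set F) (Box B1 : F → F)
    (φs : List F) (φ : F)
    (hEA : ∀ χ, Deriv L EA χ → Deriv L T' χ)
    (compl : ∀ ψ ∈ φs, Deriv L T' (L.imp (Box ψ) (B1 (Box ψ))))
    (dist : ∀ χ ψ, Deriv L T' (L.imp (B1 (L.imp χ ψ)) (L.imp (B1 χ) (B1 ψ))))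
    (nec : ∀ χ, Deriv L T' χ → Deriv L T' (B1 χ))
    (h : Deriv L T' (L.imp (conjList L (φs.map (fun ψ => L.imp (Box ψ) ψ))) (B1 φ))) :
    Deriv L T' (B1 (L.imp (conjList L (φs.map (fun ψ => L.neg (Box ψ)))) φ)) :=
  stmt12_general L T' Box B1 φs φ compl dist nec h
end

section
/- In the abstract modal setting with two modalities B₁ (for [n]) and B₂ (for [n+1]) over theories T^β and U^β, the reflexive induction hypothesis ∀ψ (Box_{U^β} ψ ↔ Box_{T^β} B₂ ψ) implies its relativized versions: ∀ψ (B₁-relativized provability [n]_{U^β} ψ → [n]_{T^β} B₂ ψ) and conversely, given provable Σ_{n+2}-completeness EA ⊢ π → B₂π and EA ⊢ ¬π → B₂¬π for Π_n-sentences π. -/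
section Aux
variable {F : Type} {L : Lang F} {Γ Δ : Set F} {φ ψ χ : F}

theorem Deriv.mono (h : Deriv L Γ φ) (hs : Γ ⊆ Δ) : Deriv L Δ φ := by
  induction h with
  | hyp h => exact .hyp (hs h)
  | ax1 a b => exact .ax1 a b
  | ax2 a b c => exact .ax2 a b c
  | ax3 a b => exact .ax3 a b
  | mp _ _ ih1 ih2 => exact ih1.mp ih2

theorem Deriv.imp_id : Deriv L Γ (L.imp φ φ) :=
  ((Deriv.ax2 φ (L.imp φ φ) φ).mp (Deriv.ax1 _ _)).mp (Deriv.ax1 _ _)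

theorem Deriv.deduction_s18 (h : Deriv L (insert φ Γ) ψ) : Deriv L Γ (L.imp φ ψ) := by
  induction h with
  | hyp h =>
    rcases Set.mem_insert_iff.mp h with rfl | h
    · exact Deriv.imp_id
    · exact (Deriv.ax1 _ _).mp (.hyp h)
  | ax1 a b => exact (Deriv.ax1 _ _).mp (.ax1 a b)
  | ax2 a b c => exact (Deriv.ax1 _ _).mp (.ax2 a b c)
  | ax3 a b => exact (Deriv.ax1 _ _).mp (.ax3 a b)
  | mp _ _ ih1 ih2 => exact ((Deriv.ax2 _ _ _).mp ih1).mp ih2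

theorem Deriv.self : Deriv L (insert φ Γ) φ := .hyp (Set.mem_insert _ _)

theorem Deriv.weak (h : Deriv L Γ ψ) : Deriv L (insert φ Γ) ψ :=
  h.mono (Set.subset_insert _ _)

theorem Deriv.trans (h1 : Deriv L Γ (L.imp φ ψ)) (h2 : Deriv L Γ (L.imp ψ χ)) :
    Deriv L Γ (L.imp φ χ) :=
  Deriv.deduction_s18 (h2.weak.mp (h1.weak.mp Deriv.self))

theorem Deriv.efq : Deriv L Γ (L.imp L.bot ψ) :=
  (Deriv.ax3 ψ L.bot).mp ((Deriv.ax1 _ _).mp Deriv.imp_id)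

theorem Deriv.dne : Deriv L Γ (L.imp (L.neg (L.neg χ)) χ) :=
  (Deriv.ax3 χ (L.neg (L.neg χ))).mp
    (Deriv.deduction_s18 (Deriv.deduction_s18 (Deriv.self.mp Deriv.self.weak)))

theorem Deriv.byCases (h1 : Deriv L Γ (L.imp φ χ)) (h2 : Deriv L Γ (L.imp (L.neg φ) χ)) :
    Deriv L Γ χ := by
  have hnn : Deriv L Γ (L.imp (L.neg χ) L.bot) := by
    apply Deriv.deduction_s18
    have hnφ : Deriv L (insert (L.neg χ) Γ) (L.neg φ) :=
      Deriv.deduction_s18 (Deriv.self.weak.mp (h1.weak.weak.mp Deriv.self))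
    exact Deriv.self.mp (h2.weak.mp hnφ)
  exact Deriv.dne.mp hnn

theorem Deriv.negImp : Deriv L Γ (L.imp (L.neg φ) (L.imp φ ψ)) :=
  Deriv.deduction_s18 (Deriv.deduction_s18 (Deriv.efq.mp (Deriv.self.weak.mp Deriv.self)))

end Aux

/-- In the abstract setting with modality `B₂` (for
`[n+1]_S`), theories `U = U^β`, `T = T^β`, and the relativized provability
`[n]_V ψ := ∃ true Π_n-sentence π with V ⊢ π → ψ` (with `TruePi ⊆ PiN` the set
of true `Π_n`-sentences), the reflexive induction hypothesis
`∀ψ (Box_{U^β} ψ ↔ Box_{T^β} B₂ ψ)` implies its relativized versions: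
`[n]_{U^β} ψ → [n]_{T^β} B₂ ψ` and conversely, given provable
`Σ_{n+2}`-completeness `EA ⊢ π → B₂π` and `EA ⊢ ¬π → B₂¬π` for
`π ∈ Π_n`. -/
theorem stmt18 {F : Type} (L : Lang F) (EA U T : Set F) (B2 : F → F)
    (PiN TruePi : Set F)
    (hTrue : TruePi ⊆ PiN)
    (hExtU : ∀ φ, Deriv L EA φ → Deriv L U φ)
    (hExtT : ∀ φ, Deriv L EA φ → Deriv L T φ)
    (nec : ∀ φ, Deriv L EA φ → Deriv L EA (B2 φ))
    (dist : ∀ φ ψ, Deriv L EA (L.imp (B2 (L.imp φ ψ)) (L.imp (B2 φ) (B2 ψ))))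
    (complPos : ∀ π ∈ PiN, Deriv L EA (L.imp π (B2 π)))
    (complNeg : ∀ π ∈ PiN, Deriv L EA (L.imp (L.neg π) (B2 (L.neg π))))
    -- the reflexive induction hypothesis at stage β
    (IH : ∀ ψ, Deriv L U ψ ↔ Deriv L T (B2 ψ)) :
    ∀ ψ, ((∃ π ∈ TruePi, Deriv L U (L.imp π ψ)) ↔
      (∃ π ∈ TruePi, Deriv L T (L.imp π (B2 ψ)))) := by
  intro ψ
  constructor
  · rintro ⟨π, hπ, hU⟩
    refine ⟨π, hπ, ?_⟩
    have h1 : Deriv L T (B2 (L.imp π ψ)) := (IH _).mp hU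
    have h2 : Deriv L T (L.imp (B2 π) (B2 ψ)) := (hExtT _ (dist π ψ)).mp h1
    exact (hExtT _ (complPos π (hTrue hπ))).trans h2
  · rintro ⟨π, hπ, hT⟩
    refine ⟨π, hπ, ?_⟩
    apply (IH _).mpr
    have hpos : Deriv L T (L.imp π (B2 (L.imp π ψ))) := by
      have := (hExtT _ ((dist ψ (L.imp π ψ)).mp (nec _ (Deriv.ax1 ψ π))))
      exact hT.trans this
    have hneg : Deriv L T (L.imp (L.neg π) (B2 (L.imp π ψ))) := by
      have h3 : Deriv L EA (L.imp (B2 (L.neg π)) (B2 (L.imp π ψ))) :=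
        (dist (L.neg π) (L.imp π ψ)).mp (nec _ Deriv.negImp)
      exact hExtT _ ((complNeg π (hTrue hπ)).trans h3)
    exact hpos.byCases hneg
end
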